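/- arXiv:math/0411145 — 6 statements merged into one kernel-verified Lean document; each statement's English description precedes it below -/
import Mathlib

section
/- The ordinary generating function of the ψ-Stirling numbers of the second kind with fixed lower index k equals x^k / ((1 − 1_ψ x)(1 − 2_ψ x)···(1 − k_ψ x)), i.e. Σ_{n≥0} {n choose k}~_ψ x^n · Π_{j=1}^{k} (1 − j_ψ x) = x^k as formal power series, for every k ≥ 0. -/
open Finset

namespace PowerSeries

variable {R : Type*} [CommRing R]

theorem mk_mul_one_sub_C_mul_X_of_succ {f g : ℕ → R} {c : R} (h0 : f 0 = 0)
    (hsucc : ∀ n, f (n + 1) = g n + c * f n) :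
    mk f * (1 - C c * X) = X * mk g := by
  ext n
  rw [mul_sub, mul_one, mul_comm (C c) X, ← mul_assoc, map_sub]
  cases n with
  | zero => simp [h0]
  | succ m => simp [hsucc, mul_comm]

end PowerSeries

/-- the ordinary generating function of the ψ-Stirling numbers of
the second kind with fixed lower index `k` equals
`x^k / ((1-1_ψ x)(1-2_ψ x)⋯(1-k_ψ x))`, i.e.
`(∑_n {n,k}ψ x^n) · ∏_{j=1}^k (1 - j_ψ x) = x^k` as formal power series. -/
theorem psi_stirling_ogf_closed_form
    (s : ℕ → ℝ) (St : ℕ → ℕ → ℝ)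
    (hrec : ∀ n k : ℕ, 1 ≤ k → St (n + 1) k = St n (k - 1) + s k * St n k)
    (hdelta : ∀ n : ℕ, St n 0 = if n = 0 then 1 else 0)
    (hvanish : ∀ n k : ℕ, n < k → St n k = 0) :
    ∀ k : ℕ,
      (PowerSeries.mk fun n => St n k) *
          ∏ j ∈ Finset.Icc 1 k, (1 - PowerSeries.C (s j) * PowerSeries.X) =
        PowerSeries.X ^ k := by
  intro k
  induction k with
  | zero =>
    ext n
    simp [hdelta n, PowerSeries.coeff_one]
  | succ k ih =>
    have hstep : (PowerSeries.mk fun n => St n (k + 1)) *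
        (1 - PowerSeries.C (s (k + 1)) * PowerSeries.X) =
        PowerSeries.X * PowerSeries.mk fun n => St n k :=
      PowerSeries.mk_mul_one_sub_C_mul_X_of_succ (hvanish 0 (k + 1) k.succ_pos)
        fun n => hrec n (k + 1) (Nat.le_add_left 1 k)
    rw [prod_Icc_succ_top (Nat.le_add_left 1 k), mul_comm _ (1 - _), ← mul_assoc, hstep, mul_assoc,
      ih, pow_succ']
end

section
/- For all n, k ≥ 0, the ψ-Stirling number of the second kind is given explicitly by {n choose k}~_ψ = Σ over all weakly increasing sequences 1 ≤ i_1 ≤ i_2 ≤ ··· ≤ i_{n−k} ≤ k of the products (i_1)_ψ (i_2)_ψ ··· (i_{n−k})_ψ (where the empty product for n = k is 1, and the sum is 0 if n < k and k ≥ 1). -/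
open Finset

noncomputable def Tpsi (s : ℕ → ℝ) (m k : ℕ) : ℝ :=
  ∑ f ∈ Finset.univ.filter
      (fun f : Fin m → Fin (k + 1) =>
        Monotone f ∧ ∀ i, 1 ≤ (f i : ℕ)),
    ∏ i, s (f i : ℕ)

lemma Tpsi_zero (s : ℕ → ℝ) (k : ℕ) : Tpsi s 0 k = 1 := by
  unfold Tpsi
  rw [Finset.filter_true_of_mem]
  · simp
  · intro f _
    exact ⟨fun a => a.elim0, fun i => i.elim0⟩

lemma Tpsi_pos_zero (s : ℕ → ℝ) (m : ℕ) : Tpsi s (m + 1) 0 = 0 := by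
  unfold Tpsi
  rw [Finset.filter_false_of_mem, Finset.sum_empty]
  intro f _ hf
  have h1 := hf.2 0
  have h2 : (f 0 : ℕ) < 1 := (f 0).2
  omega

lemma Tpsi_rec (s : ℕ → ℝ) (m k : ℕ) :
    Tpsi s (m + 1) (k + 1) = Tpsi s (m + 1) k + s (k + 1) * Tpsi s m (k + 1) := by
  unfold Tpsi
  rw [← Finset.sum_filter_add_sum_filter_not
      (Finset.univ.filter (fun f : Fin (m + 1) → Fin (k + 2) =>
        Monotone f ∧ ∀ i, 1 ≤ (f i : ℕ)))
      (fun f => f (Fin.last m) = Fin.last (k + 1))]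
  rw [add_comm]
  congr 1
  · -- not-last part = Tpsi s (m+1) k
    rw [Finset.filter_filter]
    refine Finset.sum_bij'
      (fun f hf => fun x => Fin.castPred (f x) ?_)
      (fun g _ => fun x => Fin.castSucc (g x)) ?_ ?_ ?_ ?_ ?_
    · -- f x ≠ last
      simp only [Finset.mem_filter] at hf
      intro hx
      have hle : f x ≤ f (Fin.last m) := hf.2.1.1 (Fin.le_last x)
      have := hf.2.2
      apply this
      apply le_antisymm (Fin.le_last _)
      rw [← hx]; exact hle
    · intro f hf
      simp only [Finset.mem_filter, Finset.mem_univ, true_and] at hf ⊢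
      refine ⟨fun a b hab => ?_, fun i => ?_⟩
      · have := hf.1.1 hab
        rw [Fin.le_def, Fin.coe_castPred, Fin.coe_castPred]
        exact this
      · have := hf.1.2 i
        rw [Fin.coe_castPred]
        exact this
    · intro g hg
      simp only [Finset.mem_filter, Finset.mem_univ, true_and] at hg ⊢
      refine ⟨⟨fun a b hab => ?_, fun i => ?_⟩, ?_⟩
      · exact Fin.castSucc_le_castSucc_iff.mpr (hg.1 hab)
      · rw [Fin.coe_castSucc]; exact hg.2 i
      · exact fun h => absurd h (Fin.castSucc_lt_last _).ne
    · intro f hf; funext x; exact Fin.castSucc_castPred _ _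
    · intro g hg; funext x; exact Fin.castPred_castSucc _
    · intro f hf
      apply Finset.prod_congr rfl
      intro x _
      rw [Fin.coe_castPred]
  · -- last part = s (k+1) * Tpsi s m (k+1)
    rw [Finset.filter_filter, Finset.mul_sum]
    refine Finset.sum_bij'
      (fun f _ => fun x => f (Fin.castSucc x))
      (fun g _ => Fin.snoc g (Fin.last (k + 1))) ?_ ?_ ?_ ?_ ?_
    · intro f hf
      simp only [Finset.mem_filter, Finset.mem_univ, true_and] at hf ⊢
      exact ⟨fun a b hab => hf.1.1 (by simpa using hab), fun i => hf.1.2 _⟩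
    · intro g hg
      simp only [Finset.mem_filter, Finset.mem_univ, true_and] at hg ⊢
      refine ⟨⟨fun a b hab => ?_, fun i => ?_⟩, by simp⟩
      · rcases Fin.eq_castSucc_or_eq_last b with ⟨b', rfl⟩ | rfl
        · have hab' : a < Fin.last m := lt_of_le_of_lt hab (Fin.castSucc_lt_last b')
          rcases Fin.eq_castSucc_or_eq_last a with ⟨a', rfl⟩ | rfl
          · simp only [Fin.snoc_castSucc]
            exact hg.1 (by simpa using hab)
          · exact absurd hab' (lt_irrefl _)
        · rw [Fin.snoc_last]
          exact Fin.le_last _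
      · rcases Fin.eq_castSucc_or_eq_last i with ⟨i', rfl⟩ | rfl
        · simp only [Fin.snoc_castSucc]; exact hg.2 i'
        · rw [Fin.snoc_last]; simp
    · intro f hf
      simp only [Finset.mem_filter, Finset.mem_univ, true_and] at hf
      funext x
      rcases Fin.eq_castSucc_or_eq_last x with ⟨x', rfl⟩ | rfl
      · simp
      · simp [hf.2]
    · intro g hg; funext x; simp
    · intro f hf
      simp only [Finset.mem_filter, Finset.mem_univ, true_and] at hf
      rw [Fin.prod_univ_castSucc, hf.2]
      simp [mul_comm]

/-- explicit formula for the ψ-Stirling numbers of the second kind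
as a sum over weakly increasing sequences `1 ≤ i_1 ≤ ⋯ ≤ i_{n-k} ≤ k` of the
products `(i_1)_ψ ⋯ (i_{n-k})_ψ` (empty product is `1` for `n = k`; the value
is `0` when `n < k`, `k ≥ 1`). -/
theorem psi_stirling_monotone_sum_formula
    (s : ℕ → ℝ) (St : ℕ → ℕ → ℝ)
    (hrec : ∀ n k : ℕ, 1 ≤ k → St (n + 1) k = St n (k - 1) + s k * St n k)
    (hdelta : ∀ n : ℕ, St n 0 = if n = 0 then 1 else 0)
    (hvanish : ∀ n k : ℕ, n < k → St n k = 0) :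
    ∀ n k : ℕ,
      (k ≤ n → St n k =
        ∑ f ∈ Finset.univ.filter
            (fun f : Fin (n - k) → Fin (k + 1) =>
              Monotone f ∧ ∀ i, 1 ≤ (f i : ℕ)),
          ∏ i, s (f i : ℕ)) ∧
      (n < k → St n k = 0) := by
  have key : ∀ n k : ℕ, k ≤ n → St n k = Tpsi s (n - k) k := by
    intro n
    induction n with
    | zero =>
      intro k hk
      interval_cases k
      rw [hdelta, Tpsi_zero]; simp
    | succ n ih =>
      intro k hk
      cases k with
      | zero =>
        rw [hdelta]
        have : n + 1 - 0 = n + 1 := rfl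
        rw [this, Tpsi_pos_zero]
        simp
      | succ j =>
        rw [hrec n (j + 1) (by omega)]
        simp only [Nat.add_sub_cancel]
        rcases Nat.lt_or_ge n (j + 1) with h | h
        · -- k = n + 1
          have hj : j = n := by omega
          subst hj
          rw [hvanish j (j + 1) (by omega), ih j (le_refl j)]
          simp only [Nat.sub_self, mul_zero, add_zero, Tpsi_zero]
        · -- k ≤ n
          rw [ih j (by omega), ih (j + 1) h]
          have h1 : n - j = (n - (j + 1)) + 1 := by omega
          have h2 : n + 1 - (j + 1) = (n - (j + 1)) + 1 := by omega
          rw [h1, h2, Tpsi_rec]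
  intro n k
  refine ⟨fun hk => ?_, fun hk => hvanish n k hk⟩
  rw [key n k hk]; rfl
end

section
/- Define ψ-exponential polynomials A_n(y) = Σ_{k=0}^n {n choose k}~_ψ y^k, where {n choose k}~_ψ are the ψ-Stirling numbers of the second kind. Then A_n(y) = (y(1 + ∂_ψ))^n applied to the constant polynomial 1, where ∂_ψ is the ψ-derivative acting by ∂_ψ y^m = m_ψ y^{m−1}; equivalently A_n(y) = y(1 + ∂_ψ) A_{n−1}(y) for n ≥ 1, A_0 = 1. -/
open Polynomial Finset

/-- The ψ-derivative: the linear operator with `∂_ψ y^m = m_ψ y^{m-1}`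
(and `∂_ψ 1 = 0`, since `s 0 = 0`). -/
noncomputable def psiDeriv (s : ℕ → ℝ) (p : ℝ[X]) : ℝ[X] :=
  p.sum fun n a => C (a * s n) * X ^ (n - 1)

lemma psiDeriv_monomial (s : ℕ → ℝ) (a : ℝ) (k : ℕ) :
    psiDeriv s (C a * X ^ k) = C (a * s k) * X ^ (k - 1) := by
  rw [C_mul_X_pow_eq_monomial, psiDeriv, Polynomial.sum_monomial_index]
  simp

lemma psiDeriv_sum (s : ℕ → ℝ) (n : ℕ) (f : ℕ → ℝ[X]) :
    psiDeriv s (∑ i ∈ range n, f i) = ∑ i ∈ range n, psiDeriv s (f i) := by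
  induction n with
  | zero => simp [psiDeriv]
  | succ m ih =>
      rw [Finset.sum_range_succ, Finset.sum_range_succ, ← ih, psiDeriv, psiDeriv, psiDeriv,
        Polynomial.sum_add_index]
      · intro i; simp
      · intro i a b; rw [add_mul, map_add, add_mul]

/-- the ψ-exponential polynomials
`A_n(y) = ∑_{k=0}^n {n,k}ψ y^k` satisfy `A_n(y) = (y(1+∂_ψ))^n 1`;
equivalently `A_n(y) = y(1+∂_ψ) A_{n-1}(y)` for `n ≥ 1`, `A_0 = 1`. -/
theorem psi_exponential_polynomials_operator_formula
    (s : ℕ → ℝ) (hs0 : s 0 = 0)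
    (St : ℕ → ℕ → ℝ)
    (hrec : ∀ n k : ℕ, 1 ≤ k → St (n + 1) k = St n (k - 1) + s k * St n k)
    (hdelta : ∀ n : ℕ, St n 0 = if n = 0 then 1 else 0)
    (hvanish : ∀ n k : ℕ, n < k → St n k = 0)
    (A : ℕ → ℝ[X])
    (hA : ∀ n : ℕ, A n = ∑ k ∈ range (n + 1), C (St n k) * X ^ k) :
    (∀ n : ℕ, A n = (fun p : ℝ[X] => X * (p + psiDeriv s p))^[n] 1) ∧
    A 0 = 1 ∧
    (∀ n : ℕ, 1 ≤ n → A n = X * (A (n - 1) + psiDeriv s (A (n - 1)))) := by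
  have hA0 : A 0 = 1 := by
    rw [hA]; simp [hdelta 0]
  have key : ∀ n : ℕ, A (n + 1) = X * (A n + psiDeriv s (A n)) := by
    intro n
    have hL : A (n + 1) =
        ∑ k ∈ range (n + 1), C (St n k) * X ^ (k + 1) +
        ∑ k ∈ range (n + 1), C (s (k + 1) * St n (k + 1)) * X ^ (k + 1) := by
      rw [hA, Finset.sum_range_succ', hdelta]
      simp only [Nat.succ_ne_zero, if_false, map_zero, zero_mul, add_zero]
      rw [← Finset.sum_add_distrib]
      refine Finset.sum_congr rfl fun k _ => ?_
      rw [hrec n (k + 1) (Nat.le_add_left 1 k), Nat.add_sub_cancel, map_add, add_mul]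
    have hR : X * (A n + psiDeriv s (A n)) =
        ∑ k ∈ range (n + 1), C (St n k) * X ^ (k + 1) +
        ∑ k ∈ range (n + 1), C (s (k + 1) * St n (k + 1)) * X ^ (k + 1) := by
      rw [hA n, psiDeriv_sum]
      simp only [psiDeriv_monomial]
      rw [mul_add, Finset.mul_sum, Finset.mul_sum]
      congr 1
      · refine Finset.sum_congr rfl fun k _ => ?_
        ring
      · rw [Finset.sum_range_succ' (fun k => X * (C (St n k * s k) * X ^ (k - 1)))]
        simp only [Nat.add_sub_cancel, hs0, mul_zero, map_zero, zero_mul, mul_zero, add_zero]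
        rw [Finset.sum_range_succ]
        rw [hvanish n (n + 1) (Nat.lt_succ_self n)]
        simp only [mul_zero, zero_mul, map_zero, add_zero, mul_zero]
        refine Finset.sum_congr rfl fun k _ => ?_
        rw [mul_comm (St n (k + 1)) (s (k + 1))]
        ring
    rw [hL, hR]
  refine ⟨?_, hA0, ?_⟩
  · intro n
    induction n with
    | zero => simpa using hA0
    | succ m ih => rw [Function.iterate_succ_apply', ← ih, key]
  · intro n hn
    obtain ⟨m, rfl⟩ := Nat.exists_eq_add_of_le hn
    simpa [Nat.add_comm] using key m
end

section
/- (Classical Dobinski formula.) For every n ≥ 0, the n-th Bell number satisfies B_n = e^{-1} Σ_{r≥0} r^n / r!, where B_n = Σ_{k=0}^n S(n,k) is the sum of the Stirling numbers of the second kind. -/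
open Finset

/-- Stirling numbers of the second kind: `stirling2 n k` is the number of
partitions of an `n`-set into `k` blocks. -/
def stirling2 : ℕ → ℕ → ℕ
  | 0, 0 => 1
  | 0, _ + 1 => 0
  | _ + 1, 0 => 0
  | n + 1, k + 1 => stirling2 n k + (k + 1) * stirling2 n (k + 1)

lemma stirling2_eq_zero : ∀ {n k : ℕ}, n < k → stirling2 n k = 0
  | 0, _ + 1, _ => rfl
  | n + 1, k + 1, h => by
    have h1 : n < k := Nat.lt_of_succ_lt_succ h
    show stirling2 n k + (k + 1) * stirling2 n (k + 1) = 0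
    rw [stirling2_eq_zero h1, stirling2_eq_zero (h1.trans (Nat.lt_succ_self k))]
    simp

lemma mul_descFactorial (r k : ℕ) :
    r * r.descFactorial k = r.descFactorial (k + 1) + k * r.descFactorial k := by
  rcases le_or_gt k r with h | h
  · rw [Nat.descFactorial_succ]
    have : r - k + k = r := Nat.sub_add_cancel h
    nlinarith [Nat.sub_add_cancel h]
  · rw [Nat.descFactorial_eq_zero_iff_lt.mpr h,
      Nat.descFactorial_eq_zero_iff_lt.mpr (h.trans (Nat.lt_succ_self k))]
    simp

lemma pow_eq_sum_stirling2 (n r : ℕ) :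
    r ^ n = ∑ k ∈ range (n + 1), stirling2 n k * r.descFactorial k := by
  induction n with
  | zero => simp [stirling2]
  | succ n ih =>
    have : r ^ (n + 1) = ∑ k ∈ range (n + 1), stirling2 n k * (r * r.descFactorial k) := by
      rw [pow_succ, mul_comm, ih, Finset.mul_sum]
      refine Finset.sum_congr rfl fun k _ => by ring
    rw [this]
    simp_rw [mul_descFactorial, Nat.mul_add]
    rw [Finset.sum_add_distrib]
    have h1 : ∑ k ∈ range (n + 1), stirling2 n k * r.descFactorial (k + 1)
        = ∑ k ∈ range (n + 2), (if k = 0 then 0 else stirling2 n (k - 1)) * r.descFactorial k := by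
      rw [Finset.sum_range_succ' (fun k => (if k = 0 then 0 else stirling2 n (k - 1)) * r.descFactorial k)]
      simp
    have h2 : ∑ k ∈ range (n + 1), stirling2 n k * (k * r.descFactorial k)
        = ∑ k ∈ range (n + 2), k * stirling2 n k * r.descFactorial k := by
      rw [Finset.sum_range_succ (fun k => k * stirling2 n k * r.descFactorial k),
        stirling2_eq_zero (Nat.lt_succ_self n)]
      simp only [Nat.mul_zero, Nat.zero_mul, Nat.add_zero]
      exact Finset.sum_congr rfl fun k _ => by ring
    rw [h1, h2, ← Finset.sum_add_distrib]
    refine Finset.sum_congr rfl fun k _ => ?_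
    cases k with
    | zero => simp [stirling2]
    | succ m =>
      simp only [Nat.succ_ne_zero, if_false, Nat.succ_sub_one]
      show stirling2 n m * _ + _ = stirling2 (n+1) (m+1) * _
      rw [show stirling2 (n+1) (m+1) = stirling2 n m + (m + 1) * stirling2 n (m+1) from rfl]
      ring

lemma summable_desc (k : ℕ) :
    Summable (fun r : ℕ => (r.descFactorial k : ℝ) / r.factorial) := by
  have hinj : Function.Injective (fun r : ℕ => r + k) := fun a b h => by simpa using h
  have h0 : ∀ x ∉ Set.range (fun r : ℕ => r + k),
      (x.descFactorial k : ℝ) / x.factorial = 0 := by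
    intro x hx
    have hxk : x < k := by
      by_contra h
      exact hx ⟨x - k, by simp; omega⟩
    rw [Nat.descFactorial_eq_zero_iff_lt.mpr hxk]
    simp
  rw [← hinj.summable_iff h0]
  have : (fun r : ℕ => ((r + k).descFactorial k : ℝ) / (r + k).factorial)
      = fun r : ℕ => (1 : ℝ) / r.factorial := by
    funext r
    have hfac : (r.factorial : ℝ) * ((r + k).descFactorial k : ℝ) = ((r + k).factorial : ℝ) := by
      have := Nat.factorial_mul_descFactorial (show k ≤ r + k by omega)
      rw [show r + k - k = r by omega] at this
      exact_mod_cast this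
    have h1 : ((r + k).factorial : ℝ) ≠ 0 := by positivity
    have h2 : (r.factorial : ℝ) ≠ 0 := by positivity
    field_simp
    linarith [hfac]
  show Summable ((fun r : ℕ => (r.descFactorial k : ℝ) / r.factorial) ∘ (fun r => r + k))
  simp only [Function.comp_def]
  rw [this]
  simpa using Real.summable_pow_div_factorial 1
  
lemma tsum_desc (k : ℕ) :
    (∑' r : ℕ, (r.descFactorial k : ℝ) / r.factorial) = Real.exp 1 := by
  have hinj : Function.Injective (fun r : ℕ => r + k) := fun a b h => by simpa using h
  have h0 : Function.support (fun x : ℕ => (x.descFactorial k : ℝ) / x.factorial)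
      ⊆ Set.range (fun r : ℕ => r + k) := by
    intro x hx
    rcases le_or_gt k x with h | h
    · exact ⟨x - k, by simp; omega⟩
    · exfalso; apply hx
      show (x.descFactorial k : ℝ) / x.factorial = 0
      rw [Nat.descFactorial_eq_zero_iff_lt.mpr h]; simp
  rw [← hinj.tsum_eq h0]
  have : (fun r : ℕ => ((r + k).descFactorial k : ℝ) / (r + k).factorial)
      = fun r : ℕ => (1 : ℝ) / r.factorial := by
    funext r
    have hfac : (r.factorial : ℝ) * ((r + k).descFactorial k : ℝ) = ((r + k).factorial : ℝ) := by
      have := Nat.factorial_mul_descFactorial (show k ≤ r + k by omega)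
      rw [show r + k - k = r by omega] at this
      exact_mod_cast this
    have h1 : ((r + k).factorial : ℝ) ≠ 0 := by positivity
    have h2 : (r.factorial : ℝ) ≠ 0 := by positivity
    field_simp
    linarith [hfac]
  rw [show (fun r : ℕ => (((fun r : ℕ => r + k) r).descFactorial k : ℝ) / ((fun r : ℕ => r + k) r).factorial) = fun r : ℕ => (1:ℝ) / r.factorial from this]
  rw [Real.exp_eq_exp_ℝ, NormedSpace.exp_eq_tsum_div]
  simp

/-- classical Dobinski formula: for every `n ≥ 0`, the `n`-th
Bell number `B_n = ∑_{k=0}^n S(n,k)` satisfies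
`B_n = e^{-1} ∑_{r≥0} r^n / r!`. -/
theorem dobinski_formula (n : ℕ) :
    ((∑ k ∈ range (n + 1), stirling2 n k : ℕ) : ℝ) =
      Real.exp (-1) * ∑' r : ℕ, (r : ℝ) ^ n / (r.factorial : ℝ) := by
  have hterm : ∀ r : ℕ, ((r : ℝ) ^ n / (r.factorial : ℝ))
      = ∑ k ∈ range (n + 1), (stirling2 n k : ℝ) * ((r.descFactorial k : ℝ) / r.factorial) := by
    intro r
    have := pow_eq_sum_stirling2 n r
    have hcast : ((r : ℝ)) ^ n = ∑ k ∈ range (n + 1), (stirling2 n k : ℝ) * (r.descFactorial k : ℝ) := by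
      exact_mod_cast congrArg (Nat.cast : ℕ → ℝ) this
    rw [hcast, Finset.sum_div]
    refine Finset.sum_congr rfl fun k _ => by ring
  have hsum : (∑' r : ℕ, (r : ℝ) ^ n / (r.factorial : ℝ))
      = ∑ k ∈ range (n + 1), (stirling2 n k : ℝ) * Real.exp 1 := by
    calc (∑' r : ℕ, (r : ℝ) ^ n / (r.factorial : ℝ))
        = ∑' r : ℕ, ∑ k ∈ range (n + 1),
            (stirling2 n k : ℝ) * ((r.descFactorial k : ℝ) / r.factorial) := by
          exact tsum_congr hterm
      _ = ∑ k ∈ range (n + 1), ∑' r : ℕ,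
            (stirling2 n k : ℝ) * ((r.descFactorial k : ℝ) / r.factorial) := by
          exact Summable.tsum_finsetSum fun k _ => (summable_desc k).mul_left _
      _ = ∑ k ∈ range (n + 1), (stirling2 n k : ℝ) * Real.exp 1 := by
          refine Finset.sum_congr rfl fun k _ => ?_
          rw [tsum_mul_left, tsum_desc]
  rw [hsum, ← Finset.sum_mul, ← mul_assoc, mul_comm (Real.exp (-1)), mul_assoc,
    ← Real.exp_add]
  simp
end

section
/- (ψ-Dobinski-like formula, formal version.) Suppose (n_ψ)_{n≥1} are positive reals such that ε(ψ,r) = Σ_{k≥r} (−1)^{k−r}/(k_ψ − r_ψ)! converges absolutely for each r (where (k_ψ − r_ψ)! denotes Π_{j=1}^{k−r} ((r+j)_ψ − r_ψ) suitably interpreted, specializing to ordinary factorials when n_ψ = n) and Σ_{r≥0} ε(ψ,r) r_ψ^n / r_ψ! converges. Then for the classical case n_ψ = n this gives B~_n(ψ) = Σ_{k=0}^n {n choose k}~_ψ = Σ_{r≥0} ε(ψ,r) r_ψ^n / r_ψ!, which reduces to the Dobinski formula B_n = e^{-1} Σ_{r≥0} r^n/r!. -/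
open Finset Polynomial
open scoped Nat

/-!
In the classical case `s r = r`, the recurrence makes `St n k` the Stirling numbers of the second
kind, which expand `x ^ n` in the falling factorials `x (x - 1) ⋯ (x - k + 1)`. Since
`∑_r r (r - 1) ⋯ (r - k + 1) / r! = ∑_j 1 / j! = e` for every `k`, summing the expansion of `r ^ n`
against `1 / r!` gives Dobinski's formula `∑_r r ^ n / r! = e · B_n`, and `ε(ψ, r) = e⁻¹`.
-/

theorem Real.hasSum_pow_div_factorial (x : ℝ) :
    HasSum (fun n : ℕ => x ^ n / (n ! : ℝ)) (Real.exp x) := by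
  rw [Real.exp_eq_exp_ℝ]
  exact NormedSpace.expSeries_div_hasSum_exp x

theorem eq_factorial_of_succ {M : Type*} [Semiring M] {f : ℕ → M} (h0 : f 0 = 1)
    (hsucc : ∀ n : ℕ, f (n + 1) = (n + 1 : M) * f n) (n : ℕ) : f n = n ! := by
  induction n with
  | zero => simpa using h0
  | succ n ih => rw [hsucc, ih, Nat.factorial_succ]; push_cast; rfl

theorem pow_eq_sum_mul_descPochhammer_eval {R : Type*} [CommRing R] {St : ℕ → ℕ → R}
    (hrec : ∀ n k : ℕ, St (n + 1) (k + 1) = St n k + (k + 1 : R) * St n (k + 1))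
    (hdelta : ∀ n : ℕ, St n 0 = if n = 0 then 1 else 0)
    (hdiag : ∀ n : ℕ, St n (n + 1) = 0) (x : R) (n : ℕ) :
    x ^ n = ∑ k ∈ range (n + 1), St n k * (descPochhammer R k).eval x := by
  induction n with
  | zero => simp [hdelta]
  | succ n ih =>
    set P : ℕ → R := fun k => (descPochhammer R k).eval x
    replace ih : x ^ n = ∑ k ∈ range (n + 1), St n k * P k := ih
    have hxP : ∀ k : ℕ, x * P k = P (k + 1) + k * P k := fun k => by
      simp only [P, descPochhammer_succ_eval]; ring
    -- `k * St n k * P k` vanishes at both `k = 0` and `k = n + 1`, so it may be shifted by one.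
    have hshift : ∑ k ∈ range (n + 1), (k + 1 : R) * St n (k + 1) * P (k + 1) =
        ∑ k ∈ range (n + 1), (k : R) * St n k * P k := by
      have h := sum_range_succ' (fun k => (k : R) * St n k * P k) (n + 1)
      rw [sum_range_succ, hdiag] at h
      simpa using h.symm
    calc x ^ (n + 1) = ∑ k ∈ range (n + 1), St n k * (x * P k) := by
          rw [pow_succ', ih, mul_sum]
          exact sum_congr rfl fun k _ => by ring
      _ = ∑ k ∈ range (n + 1), St n k * P (k + 1) +
            ∑ k ∈ range (n + 1), (k + 1 : R) * St n (k + 1) * P (k + 1) := by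
          rw [hshift, ← sum_add_distrib]
          exact sum_congr rfl fun k _ => by rw [hxP]; ring
      _ = ∑ k ∈ range (n + 1), St (n + 1) (k + 1) * P (k + 1) := by
          rw [← sum_add_distrib]
          exact sum_congr rfl fun k _ => by rw [hrec]; ring
      _ = ∑ k ∈ range (n + 2), St (n + 1) k * P k := by
          rw [sum_range_succ' _ (n + 1), hdelta]
          simp

theorem hasSum_descFactorial_div_factorial (k : ℕ) :
    HasSum (fun r : ℕ => (r.descFactorial k : ℝ) / (r ! : ℝ)) (Real.exp 1) := by
  have hshifted : ∀ j : ℕ, ((j + k).descFactorial k : ℝ) / ((j + k)! : ℝ) = 1 ^ j / (j ! : ℝ) := by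
    intro j
    have h := Nat.factorial_mul_descFactorial (Nat.le_add_left k j)
    rw [Nat.add_sub_cancel] at h
    rw [one_pow, div_eq_div_iff (by positivity) (by positivity), ← h]
    push_cast
    ring
  have hprefix : ∑ r ∈ range k, (r.descFactorial k : ℝ) / (r ! : ℝ) = 0 :=
    sum_eq_zero fun r hr => by
      rw [Nat.descFactorial_eq_zero_iff_lt.2 (mem_range.1 hr), Nat.cast_zero, zero_div]
  have h : HasSum (fun j => ((j + k).descFactorial k : ℝ) / ((j + k)! : ℝ)) (Real.exp 1) := by
    simp_rw [hshifted]
    exact Real.hasSum_pow_div_factorial 1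
  replace h :=
    (hasSum_nat_add_iff (f := fun r : ℕ => (r.descFactorial k : ℝ) / (r ! : ℝ)) k).mp h
  rwa [hprefix, add_zero] at h

theorem hasSum_natCast_pow_div_factorial {St : ℕ → ℕ → ℝ}
    (hrec : ∀ n k : ℕ, St (n + 1) (k + 1) = St n k + (k + 1 : ℝ) * St n (k + 1))
    (hdelta : ∀ n : ℕ, St n 0 = if n = 0 then 1 else 0)
    (hdiag : ∀ n : ℕ, St n (n + 1) = 0) (n : ℕ) :
    HasSum (fun r : ℕ => (r : ℝ) ^ n / (r ! : ℝ)) (Real.exp 1 * ∑ k ∈ range (n + 1), St n k) := by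
  have hexpand : ∀ r : ℕ, (r : ℝ) ^ n / (r ! : ℝ) =
      ∑ k ∈ range (n + 1), St n k * ((r.descFactorial k : ℝ) / (r ! : ℝ)) := fun r => by
    rw [pow_eq_sum_mul_descPochhammer_eval hrec hdelta hdiag, sum_div]
    simp only [descPochhammer_eval_eq_descFactorial, mul_div_assoc]
  rw [mul_sum]
  simp only [hexpand]
  exact hasSum_sum fun k _ => by
    simpa only [mul_comm] using (hasSum_descFactorial_div_factorial k).mul_left (St n k)

/-- ψ-Dobinski-like formula, classical specialization
`n_ψ = n`: with `ε(ψ,r) = ∑_{k≥r} (-1)^{k-r}/(k-r)!` one has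
`B~_n(ψ) = ∑_{k=0}^n {n,k}ψ = ∑_{r≥0} ε(ψ,r) r_ψ^n / r_ψ!`, which reduces
to the Dobinski formula `B_n = e^{-1} ∑_{r≥0} r^n/r!`. -/
theorem psi_dobinski_classical_case
    (s : ℕ → ℝ) (hs : ∀ n : ℕ, s n = (n : ℝ))
    (sfact : ℕ → ℝ) (hsf0 : sfact 0 = 1)
    (hsf : ∀ n : ℕ, sfact (n + 1) = s (n + 1) * sfact n)
    (St : ℕ → ℕ → ℝ)
    (hrec : ∀ n k : ℕ, 1 ≤ k → St (n + 1) k = St n (k - 1) + s k * St n k)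
    (hdelta : ∀ n : ℕ, St n 0 = if n = 0 then 1 else 0)
    (hvanish : ∀ n k : ℕ, n < k → St n k = 0)
    (eps : ℕ → ℝ)
    (heps : ∀ r : ℕ, eps r = ∑' j : ℕ, (-1 : ℝ) ^ j / (j.factorial : ℝ)) :
    ∀ n : ℕ,
      ∑ k ∈ range (n + 1), St n k =
        ∑' r : ℕ, eps r * (s r) ^ n / sfact r := by
  intro n
  have hsfact : ∀ r : ℕ, sfact r = r ! :=
    eq_factorial_of_succ hsf0 fun r => by rw [hsf, hs]; push_cast; rfl
  have heps' : ∀ r : ℕ, eps r = Real.exp (-1) := fun r => by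
    rw [heps, (Real.hasSum_pow_div_factorial (-1)).tsum_eq]
  have hrec' : ∀ n k : ℕ, St (n + 1) (k + 1) = St n k + (k + 1 : ℝ) * St n (k + 1) :=
    fun n k => by rw [hrec n (k + 1) (Nat.le_add_left 1 k), hs]; push_cast; rfl
  have hdobinski := hasSum_natCast_pow_div_factorial hrec' hdelta
    (fun n => hvanish n (n + 1) n.lt_succ_self) n
  calc ∑ k ∈ range (n + 1), St n k
      = Real.exp (-1) * (Real.exp 1 * ∑ k ∈ range (n + 1), St n k) := by
        rw [← mul_assoc, ← Real.exp_add, neg_add_cancel, Real.exp_zero, one_mul]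
    _ = ∑' r : ℕ, Real.exp (-1) * ((r : ℝ) ^ n / (r ! : ℝ)) :=
        (hdobinski.mul_left _).tsum_eq.symm
    _ = ∑' r : ℕ, eps r * (s r) ^ n / sfact r :=
        tsum_congr fun r => by rw [heps', hs, hsfact, mul_div_assoc]
end

section
/- The general solution of Q f = φ in polynomials is f = f_0 + p where f_0 = Σ_{n≥1}(A_n/n_ψ!)φ^{(n−1)} + ∫_ψ φ is a particular solution and p ranges over the kernel of Q, which consists exactly of the constant polynomials. -/
open Polynomial Finset

/-- The ψ-factorial `n_ψ! = n_ψ (n-1)_ψ ⋯ 1_ψ`, `0_ψ! = 1`. -/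
noncomputable def psiFact (s : ℕ → ℝ) : ℕ → ℝ
  | 0 => 1
  | n + 1 => s (n + 1) * psiFact s n

/-- A power series in `∂_ψ`: `∑_{k≥0} (c_k / k_ψ!) ∂_ψ^k`. -/
noncomputable def opSeries (s c : ℕ → ℝ) (p : ℝ[X]) : ℝ[X] :=
  ∑ k ∈ range (p.natDegree + 1), (c k / psiFact s k) • (psiDeriv s)^[k] p

/-- The ψ-integration: the linear map with `∫_ψ x^n = x^{n+1}/(n+1)_ψ`. -/
noncomputable def psiInt (s : ℕ → ℝ) (p : ℝ[X]) : ℝ[X] :=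
  p.sum fun n a => C (a / s (n + 1)) * X ^ (n + 1)

/-!
Write `Q = ∂_ψ ∘ S`. By the coefficient formula `(∂_ψ p)ₙ = pₙ₊₁ (n+1)_ψ` the kernel of `∂_ψ` is
the constants, and `S` maps constants to constants, so invertibility of `S` gives `ker Q = {consts}`.
Since `∂_ψ ∫_ψ = id`, the polynomial `S⁻¹ ∫_ψ φ` is a particular solution; expanding `S⁻¹` on
`∫_ψ φ` and using `∂_ψ^n ∫_ψ = ∂_ψ^{n-1}` for `n ≥ 1` gives the stated formula for it.
-/

noncomputable def psiDerivₗ (s : ℕ → ℝ) : ℝ[X] →ₗ[ℝ] ℝ[X] :=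
  lsum fun n =>
    { toFun := fun a => C (a * s n) * X ^ (n - 1)
      map_add' := fun a b => by rw [add_mul, C_add, add_mul]
      map_smul' := fun r a => by rw [smul_eq_mul, mul_assoc, C_mul, mul_assoc, smul_eq_C_mul]; rfl }

theorem coe_psiDerivₗ (s : ℕ → ℝ) : ⇑(psiDerivₗ s) = psiDeriv s := rfl

theorem psiDeriv_add (s : ℕ → ℝ) (p q : ℝ[X]) :
    psiDeriv s (p + q) = psiDeriv s p + psiDeriv s q :=
  (psiDerivₗ s).map_add p q

theorem iterate_psiDeriv (s : ℕ → ℝ) (k : ℕ) : (psiDeriv s)^[k] = ⇑(psiDerivₗ s ^ k) := by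
  rw [Module.End.coe_pow, coe_psiDerivₗ]

theorem psiDeriv_C_mul_X_pow (s : ℕ → ℝ) (a : ℝ) (m : ℕ) :
    psiDeriv s (C a * X ^ m) = C (a * s m) * X ^ (m - 1) := by
  rw [C_mul_X_pow_eq_monomial, psiDeriv, sum_monomial_index _ _ (by simp)]

theorem psiDeriv_C {s : ℕ → ℝ} (hs0 : s 0 = 0) (a : ℝ) : psiDeriv s (C a) = 0 := by
  simpa [hs0] using psiDeriv_C_mul_X_pow s a 0

theorem coeff_psiDeriv {s : ℕ → ℝ} (hs0 : s 0 = 0) (p : ℝ[X]) (n : ℕ) :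
    (psiDeriv s p).coeff n = p.coeff (n + 1) * s (n + 1) := by
  induction p using Polynomial.induction_on with
  | C a => rw [psiDeriv_C hs0, coeff_C_succ, coeff_zero, zero_mul]
  | add p q hp hq => rw [psiDeriv_add, coeff_add, hp, hq, coeff_add, add_mul]
  | monomial m a _ =>
    rw [psiDeriv_C_mul_X_pow, coeff_C_mul_X_pow, coeff_C_mul_X_pow, Nat.add_sub_cancel]
    by_cases h : n = m <;> simp [h]

theorem psiDeriv_eq_zero_iff {s : ℕ → ℝ} (hs0 : s 0 = 0) (hs : ∀ n : ℕ, 1 ≤ n → s n ≠ 0)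
    (p : ℝ[X]) : psiDeriv s p = 0 ↔ ∃ a : ℝ, p = C a := by
  refine ⟨fun h => ⟨p.coeff 0, ext fun n => ?_⟩, fun ⟨a, hp⟩ => hp ▸ psiDeriv_C hs0 a⟩
  rcases n with _ | n
  · rw [coeff_C_zero]
  · have hcoeff := coeff_psiDeriv hs0 p n
    rw [h, coeff_zero, eq_comm, mul_eq_zero] at hcoeff
    rw [coeff_C_succ, hcoeff.resolve_right (hs (n + 1) n.succ_pos)]

theorem psiDeriv_psiInt {s : ℕ → ℝ} (hs : ∀ n : ℕ, 1 ≤ n → s n ≠ 0) (φ : ℝ[X]) :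
    psiDeriv s (psiInt s φ) = φ := by
  rw [psiInt, sum_def, ← coe_psiDerivₗ, map_sum]
  conv_rhs => rw [← sum_C_mul_X_pow_eq φ, sum_def]
  refine Finset.sum_congr rfl fun n _ => ?_
  rw [coe_psiDerivₗ, psiDeriv_C_mul_X_pow, div_mul_cancel₀ _ (hs (n + 1) n.succ_pos),
    Nat.add_sub_cancel]

theorem natDegree_psiDeriv_le (s : ℕ → ℝ) (p : ℝ[X]) :
    (psiDeriv s p).natDegree ≤ p.natDegree - 1 :=
  natDegree_sum_le_of_forall_le _ _ fun n hn =>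
    (natDegree_C_mul_X_pow_le _ _).trans (Nat.sub_le_sub_right (le_natDegree_of_mem_supp n hn) 1)

theorem natDegree_psiInt_le (s : ℕ → ℝ) (φ : ℝ[X]) :
    (psiInt s φ).natDegree ≤ φ.natDegree + 1 :=
  natDegree_sum_le_of_forall_le _ _ fun n hn =>
    (natDegree_C_mul_X_pow_le _ _).trans (Nat.add_le_add_right (le_natDegree_of_mem_supp n hn) 1)

theorem iterate_psiDeriv_eq_zero_of_natDegree_lt {s : ℕ → ℝ} (hs0 : s 0 = 0) {k : ℕ}
    {p : ℝ[X]} (hk : p.natDegree < k) : (psiDeriv s)^[k] p = 0 := by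
  induction k generalizing p with
  | zero => omega
  | succ k ih =>
    rw [Function.iterate_succ_apply]
    by_cases hp : p.natDegree = 0
    · rw [eq_C_of_natDegree_eq_zero hp, psiDeriv_C hs0, iterate_psiDeriv, map_zero]
    · exact ih ((natDegree_psiDeriv_le s p).trans_lt (by omega))

theorem opSeries_eq_sum_range_of_natDegree_le {s : ℕ → ℝ} (hs0 : s 0 = 0) (c : ℕ → ℝ)
    {p : ℝ[X]} {N : ℕ} (hN : p.natDegree ≤ N) :
    opSeries s c p = ∑ k ∈ range (N + 1), (c k / psiFact s k) • (psiDeriv s)^[k] p := by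
  refine Finset.sum_subset (range_subset_range.mpr (by omega)) fun k _ hk => ?_
  rw [mem_range, not_lt] at hk
  rw [iterate_psiDeriv_eq_zero_of_natDegree_lt hs0 (by omega), smul_zero]

theorem opSeries_add {s : ℕ → ℝ} (hs0 : s 0 = 0) (c : ℕ → ℝ) (p q : ℝ[X]) :
    opSeries s c (p + q) = opSeries s c p + opSeries s c q := by
  have hp : p.natDegree ≤ max p.natDegree q.natDegree := le_max_left _ _
  have hq : q.natDegree ≤ max p.natDegree q.natDegree := le_max_right _ _
  rw [opSeries_eq_sum_range_of_natDegree_le hs0 c hp,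
    opSeries_eq_sum_range_of_natDegree_le hs0 c hq,
    opSeries_eq_sum_range_of_natDegree_le hs0 c (natDegree_add_le p q), ← sum_add_distrib]
  simp only [iterate_psiDeriv, map_add, smul_add]

theorem opSeries_C (s c : ℕ → ℝ) (a : ℝ) : opSeries s c (C a) = C (c 0 * a) := by
  rw [opSeries, natDegree_C, sum_range_one, Function.iterate_zero_apply, psiFact, div_one,
    smul_C, smul_eq_mul]

theorem psiDeriv_opSeries_eq_zero_iff {s c A : ℕ → ℝ} (hs0 : s 0 = 0)
    (hs : ∀ n : ℕ, 1 ≤ n → s n ≠ 0) (hinv' : ∀ p : ℝ[X], opSeries s A (opSeries s c p) = p)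
    (p : ℝ[X]) : psiDeriv s (opSeries s c p) = 0 ↔ ∃ a : ℝ, p = C a := by
  rw [psiDeriv_eq_zero_iff hs0 hs]
  constructor
  · rintro ⟨b, hb⟩
    exact ⟨A 0 * b, by rw [← hinv' p, hb, opSeries_C]⟩
  · rintro ⟨a, rfl⟩
    exact ⟨c 0 * a, opSeries_C s c a⟩

theorem opSeries_psiInt {s A : ℕ → ℝ} (hs0 : s 0 = 0) (hs : ∀ n : ℕ, 1 ≤ n → s n ≠ 0)
    (hA0 : A 0 = 1) (φ : ℝ[X]) :
    opSeries s A (psiInt s φ) =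
      (∑ n ∈ Icc 1 (φ.natDegree + 1), (A n / psiFact s n) • (psiDeriv s)^[n - 1] φ) +
        psiInt s φ := by
  rw [opSeries_eq_sum_range_of_natDegree_le hs0 A (natDegree_psiInt_le s φ), sum_range_succ',
    ← Ico_add_one_right_eq_Icc, sum_Ico_eq_sum_range, Nat.add_sub_cancel]
  simp only [Function.iterate_succ_apply, psiDeriv_psiInt hs, add_comm 1, Nat.add_sub_cancel,
    Function.iterate_zero_apply, hA0, psiFact, div_one, one_smul]

theorem psi_appell_general_solution_general
    (s : ℕ → ℝ) (hs0 : s 0 = 0) (hs : ∀ n : ℕ, 1 ≤ n → s n ≠ 0)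
    (c : ℕ → ℝ)
    (A : ℕ → ℝ) (hA0 : A 0 = 1)
    (hinv : ∀ p : ℝ[X], opSeries s c (opSeries s A p) = p)
    (hinv' : ∀ p : ℝ[X], opSeries s A (opSeries s c p) = p)
    (φ : ℝ[X]) :
    (∀ p : ℝ[X], psiDeriv s (opSeries s c p) = 0 ↔ ∃ a : ℝ, p = C a) ∧
    (∀ f : ℝ[X],
      psiDeriv s (opSeries s c f) = φ ↔
      ∃ a : ℝ, f =
        ((∑ n ∈ Finset.Icc 1 (φ.natDegree + 1),
            (A n / psiFact s n) • (psiDeriv s)^[n - 1] φ) + psiInt s φ) + C a) := by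
  refine ⟨psiDeriv_opSeries_eq_zero_iff hs0 hs hinv', fun f => ?_⟩
  rw [← opSeries_psiInt hs0 hs hA0]
  set f₀ := opSeries s A (psiInt s φ)
  have hf₀ : psiDeriv s (opSeries s c f₀) = φ := by rw [hinv, psiDeriv_psiInt hs]
  calc psiDeriv s (opSeries s c f) = φ ↔ psiDeriv s (opSeries s c (f - f₀)) = 0 := by
        conv_lhs => rw [← sub_add_cancel f f₀, opSeries_add hs0, psiDeriv_add, hf₀, add_eq_right]
    _ ↔ ∃ a : ℝ, f - f₀ = C a := psiDeriv_opSeries_eq_zero_iff hs0 hs hinv' _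
    _ ↔ ∃ a : ℝ, f = f₀ + C a := by simp only [sub_eq_iff_eq_add']

/-- the general polynomial solution of `Q f = φ` is
`f = f₀ + p` with `f₀ = ∑_{n≥1}(A_n/n_ψ!)φ^{(n-1)} + ∫_ψ φ` a particular
solution and `p` ranging over `ker Q`, which consists exactly of the
constant polynomials. -/
theorem psi_appell_general_solution
    (s : ℕ → ℝ) (hs0 : s 0 = 0) (hs : ∀ n : ℕ, 1 ≤ n → s n ≠ 0)
    (c : ℕ → ℝ) (hc0 : c 0 ≠ 0)
    (A : ℕ → ℝ) (hA0 : A 0 = 1)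
    (hinv : ∀ p : ℝ[X], opSeries s c (opSeries s A p) = p)
    (hinv' : ∀ p : ℝ[X], opSeries s A (opSeries s c p) = p)
    (φ : ℝ[X]) :
    (∀ p : ℝ[X], psiDeriv s (opSeries s c p) = 0 ↔ ∃ a : ℝ, p = C a) ∧
    (∀ f : ℝ[X],
      psiDeriv s (opSeries s c f) = φ ↔
      ∃ a : ℝ, f =
        ((∑ n ∈ Finset.Icc 1 (φ.natDegree + 1),
            (A n / psiFact s n) • (psiDeriv s)^[n - 1] φ) + psiInt s φ) + C a) :=
  psi_appell_general_solution_general s hs0 hs c A hA0 hinv hinv' φ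
end
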